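/- arXiv:1308.6694 — 2 statements merged into one kernel-verified Lean document; each statement's English description precedes it below -/
import Mathlib

section
/- Let C ∈ ℕ and ω = τ_{C−1} τ_{C−2} ⋯ τ_1 τ_0 (ω'), where τ_q = ζ_1^q ζ_2 ζ_1 ζ_3^2 ζ_1 and ω' ∈ {1,2,3}^ℕ contains both letters 1 and 3. Then ω is not C-balanced: ω contains factors u, v with |u| = |v| and ||u|_1 − |v|_1| = C + 1. -/
def prefixW {A : Type*} (w : ℕ → A) (n : ℕ) : List A := (List.range n).map w

def IsFactor {A : Type*} (w : ℕ → A) (u : List A) : Prop :=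
  ∃ k, u = (List.range u.length).map (fun t => w (k + t))

def applySub {A : Type*} (σ : A → List A) (w : List A) : List A := w.flatMap σ

def SubstOfInf {A : Type*} (σ : A → List A) (w' w : ℕ → A) : Prop :=
  ∀ m, prefixW w (applySub σ (prefixW w' m)).length = applySub σ (prefixW w' m)

def FactorOfImage {A : Type*} (σ : A → List A) (ω : ℕ → A) (u : List A) : Prop :=
  ∃ w, IsFactor ω w ∧ u <:+: applySub σ w

def BalancedWord {A : Type*} [DecidableEq A] (C : ℕ) (w : ℕ → A) : Prop :=
  ∀ u v, IsFactor w u → IsFactor w v → u.length = v.length →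
    ∀ i, |(u.count i : ℤ) - (v.count i : ℤ)| ≤ (C : ℤ)

def z1 : Fin 3 → List (Fin 3) := fun a => if a = 2 then [1, 2] else [a]

def z2 : Fin 3 → List (Fin 3) := fun a => if a = 0 then [0] else if a = 1 then [2] else [2, 1]

def z3 : Fin 3 → List (Fin 3) := fun a => if a = 0 then [1] else if a = 1 then [2] else [2, 0]

def compSub {A : Type*} (σ τ : A → List A) : A → List A := fun a => applySub σ (τ a)

def subPow {A : Type*} (σ : A → List A) : ℕ → (A → List A)
  | 0 => fun a => [a]
  | n + 1 => compSub σ (subPow σ n)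

def tauSub (q : ℕ) : Fin 3 → List (Fin 3) :=
  compSub (subPow z1 q) (compSub z2 (compSub z1 (compSub (subPow z3 2) z1)))

def rhoSub : ℕ → (Fin 3 → List (Fin 3))
  | 0 => fun a => [a]
  | c + 1 => compSub (tauSub c) (rhoSub c)

-- auxiliary
lemma applySub_cons {A : Type*} (σ : A → List A) (a : A) (w : List A) :
    applySub σ (a :: w) = σ a ++ applySub σ w := by simp [applySub]

lemma applySub_append {A : Type*} (σ : A → List A) (x y : List A) :
    applySub σ (x ++ y) = applySub σ x ++ applySub σ y := by simp [applySub]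

lemma applySub_comp {A : Type*} (σ τ : A → List A) (w : List A) :
    applySub (compSub σ τ) w = applySub σ (applySub τ w) := by
  induction w with
  | nil => rfl
  | cons a w ih => simp [applySub_cons, ih, compSub, applySub_append]

def inner3 : Fin 3 → List (Fin 3) := compSub z2 (compSub z1 (compSub (subPow z3 2) z1))

lemma tau_eq_inner (q : ℕ) (a : Fin 3) : tauSub q a = applySub (subPow z1 q) (inner3 a) := rfl

lemma inner3_0 : inner3 0 = [2,2,1] := by decide
lemma inner3_1 : inner3 1 = [2,2,1,0] := by decide
lemma inner3_2 : inner3 2 = [2,2,1,0,2,2,1,0,2] := by decide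

lemma subPow_z1_zero (q : ℕ) : subPow z1 q 0 = [0] := by
  induction q with
  | zero => rfl
  | succ q ih => show applySub z1 (subPow z1 q 0) = [0]; rw [ih]; rfl

lemma subPow_z1_one (q : ℕ) : subPow z1 q 1 = [1] := by
  induction q with
  | zero => rfl
  | succ q ih => show applySub z1 (subPow z1 q 1) = [1]; rw [ih]; rfl

lemma applySub_z1_replicate (n : ℕ) : applySub z1 (List.replicate n 1) = List.replicate n 1 := by
  induction n with
  | zero => rfl
  | succ n ih => rw [List.replicate_succ, applySub_cons, ih]; rfl

lemma subPow_z1_two (q : ℕ) : subPow z1 q 2 = List.replicate q 1 ++ [2] := by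
  induction q with
  | zero => rfl
  | succ q ih =>
    show applySub z1 (subPow z1 q 2) = _
    rw [ih, applySub_append, applySub_z1_replicate]
    show List.replicate q 1 ++ [1, 2] = _
    rw [List.replicate_succ' ]
    simp

lemma tau1_decomp (q : ℕ) : tauSub q 1 = tauSub q 0 ++ [0] := by
  rw [tau_eq_inner, tau_eq_inner, inner3_0, inner3_1]
  simp [applySub, subPow_z1_zero, subPow_z1_one, subPow_z1_two]

lemma tau2_decomp (q : ℕ) :
    tauSub q 2 = tauSub q 0 ++ ([0] ++ (tauSub q 0 ++ ([0] ++ (List.replicate q 1 ++ [2])))) := by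
  rw [tau_eq_inner, tau_eq_inner, inner3_0, inner3_2]
  simp [applySub, subPow_z1_zero, subPow_z1_one, subPow_z1_two]

lemma tau0_explicit (q : ℕ) :
    tauSub q 0 = (List.replicate q 1 ++ [2]) ++ ((List.replicate q 1 ++ [2]) ++ [1]) := by
  rw [tau_eq_inner, inner3_0]
  simp [applySub, subPow_z1_one, subPow_z1_two]

lemma t0c0 (q : ℕ) : (tauSub q 0).count 0 = 0 := by
  rw [tau0_explicit]; simp [List.count_append, List.count_replicate]

lemma t0c1 (q : ℕ) : (tauSub q 0).count 1 = 2*q+1 := by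
  rw [tau0_explicit]; simp [List.count_append, List.count_replicate]; ring

lemma t0c2 (q : ℕ) : (tauSub q 0).count 2 = 2 := by
  rw [tau0_explicit]; simp [List.count_append, List.count_replicate]

lemma t0len (q : ℕ) : (tauSub q 0).length = 2*q+3 := by
  rw [tau0_explicit]; simp [List.length_append]; ring

lemma repc0 (q : ℕ) : (List.replicate q (1 : Fin 3)).count 0 = 0 := by
  simp [List.count_replicate]
lemma repc1 (q : ℕ) : (List.replicate q (1 : Fin 3)).count 1 = q := by
  simp [List.count_replicate]
lemma repc2 (q : ℕ) : (List.replicate q (1 : Fin 3)).count 2 = 0 := by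
  simp [List.count_replicate]

lemma t1c0 (q : ℕ) : (tauSub q 1).count 0 = 1 := by
  rw [tau1_decomp]; simp [List.count_append, t0c0]
lemma t1c1 (q : ℕ) : (tauSub q 1).count 1 = 2*q+1 := by
  rw [tau1_decomp]; simp [List.count_append, t0c1]
lemma t1c2 (q : ℕ) : (tauSub q 1).count 2 = 2 := by
  rw [tau1_decomp]; simp [List.count_append, t0c2]
lemma t1len (q : ℕ) : (tauSub q 1).length = 2*q+4 := by
  rw [tau1_decomp]; simp [List.length_append, t0len]

lemma t2c0 (q : ℕ) : (tauSub q 2).count 0 = 2 := by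
  rw [tau2_decomp]; simp [List.count_append, t0c0, repc0]
lemma t2c1 (q : ℕ) : (tauSub q 2).count 1 = 5*q+2 := by
  rw [tau2_decomp]; simp [List.count_append, t0c1, repc1]; ring
lemma t2c2 (q : ℕ) : (tauSub q 2).count 2 = 5 := by
  rw [tau2_decomp]; simp [List.count_append, t0c2, repc2]
lemma t2len (q : ℕ) : (tauSub q 2).length = 5*q+9 := by
  rw [tau2_decomp]; simp [List.length_append, t0len]; ring

lemma fmk0 : (⟨0, by omega⟩ : Fin 3) = 0 := rfl
lemma fmk1 : (⟨1, by omega⟩ : Fin 3) = 1 := rfl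
lemma fmk2 : (⟨2, by omega⟩ : Fin 3) = 2 := rfl

lemma counts_sum (w : List (Fin 3)) : w.count 0 + w.count 1 + w.count 2 = w.length := by
  induction w with
  | nil => rfl
  | cons a w ih => fin_cases a <;> simp [List.count_cons] <;> omega

lemma count0_image (q : ℕ) (w : List (Fin 3)) :
    ((applySub (tauSub q) w).count 0 : ℤ) = (w.count 1 : ℤ) + 2 * (w.count 2 : ℤ) := by
  induction w with
  | nil => rfl
  | cons a w ih =>
    rw [applySub_cons, List.count_append]
    fin_cases a <;>
      simp only [fmk0, fmk1, fmk2, t0c0, t1c0, t2c0, List.count_cons] <;> push_cast [ih] <;> simp <;> ring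

lemma count1_image (q : ℕ) (w : List (Fin 3)) :
    ((applySub (tauSub q) w).count 1 : ℤ) =
      (2*q+1) * ((w.count 0 : ℤ) + (w.count 1 : ℤ)) + (5*q+2) * (w.count 2 : ℤ) := by
  induction w with
  | nil => simp [applySub]
  | cons a w ih =>
    rw [applySub_cons, List.count_append]
    fin_cases a <;>
      simp only [fmk0, fmk1, fmk2, t0c1, t1c1, t2c1, List.count_cons] <;> push_cast [ih] <;> simp <;> ring

lemma count2_image (q : ℕ) (w : List (Fin 3)) :
    ((applySub (tauSub q) w).count 2 : ℤ) =
      2 * ((w.count 0 : ℤ) + (w.count 1 : ℤ)) + 5 * (w.count 2 : ℤ) := by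
  induction w with
  | nil => simp [applySub]
  | cons a w ih =>
    rw [applySub_cons, List.count_append]
    fin_cases a <;>
      simp only [fmk0, fmk1, fmk2, t0c2, t1c2, t2c2, List.count_cons] <;> push_cast [ih] <;> simp <;> ring

lemma length_image (q : ℕ) (w : List (Fin 3)) :
    ((applySub (tauSub q) w).length : ℤ) =
      (2*q+3) * (w.count 0 : ℤ) + (2*q+4) * (w.count 1 : ℤ) + (5*q+9) * (w.count 2 : ℤ) := by
  induction w with
  | nil => simp [applySub]
  | cons a w ih =>
    rw [applySub_cons, List.length_append]
    fin_cases a <;>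
      simp only [fmk0, fmk1, fmk2, t0len, t1len, t2len, List.count_cons] <;> push_cast [ih] <;> simp <;> ring

lemma tau0_prefix (q : ℕ) (a : Fin 3) : tauSub q 0 <+: tauSub q a := by
  fin_cases a <;> simp only [fmk0, fmk1, fmk2]
  · exact List.prefix_refl _
  · rw [tau1_decomp]; exact List.prefix_append _ _
  · rw [tau2_decomp]; exact List.prefix_append _ _

lemma tau0_prefix_image (q : ℕ) {w : List (Fin 3)} (hw : w ≠ []) :
    tauSub q 0 <+: applySub (tauSub q) w := by
  cases w with
  | nil => exact absurd rfl hw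
  | cons a w => rw [applySub_cons]; exact (tau0_prefix q a).trans (List.prefix_append _ _)

lemma length_le_image (q : ℕ) (w : List (Fin 3)) :
    (w.length : ℤ) ≤ ((applySub (tauSub q) w).length : ℤ) := by
  rw [length_image]
  have hs : (w.count 0 : ℤ) + w.count 1 + w.count 2 = w.length := by
    exact_mod_cast counts_sum w
  have hq : (0:ℤ) ≤ (q:ℤ) := by positivity
  have h0 : (0:ℤ) ≤ (w.count 0 : ℤ) := by positivity
  have h1 : (0:ℤ) ≤ (w.count 1 : ℤ) := by positivity
  have h2 : (0:ℤ) ≤ (w.count 2 : ℤ) := by positivity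
  nlinarith [mul_nonneg hq h0, mul_nonneg hq h1, mul_nonneg hq h2]

lemma one_le_rho_len (k : ℕ) (b : Fin 3) : 1 ≤ (applySub (rhoSub k) [b]).length := by
  induction k with
  | zero => simp [applySub, rhoSub]
  | succ k ih =>
    have h : applySub (rhoSub (k+1)) [b] = applySub (tauSub k) (applySub (rhoSub k) [b]) := by
      rw [show rhoSub (k+1) = compSub (tauSub k) (rhoSub k) from rfl, applySub_comp]
    rw [h]
    have := length_le_image k (applySub (rhoSub k) [b])
    omega

/-- factors of ω' whose level-k image contains u -/
def Fk (ω' : ℕ → Fin 3) (k : ℕ) (u : List (Fin 3)) : Prop :=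
  ∃ w, IsFactor ω' w ∧ u <:+: applySub (rhoSub k) w

lemma Fk_infix {ω' : ℕ → Fin 3} {k : ℕ} {u u' : List (Fin 3)}
    (h : u' <:+: u) (hu : Fk ω' k u) : Fk ω' k u' := by
  obtain ⟨w, hw, hinf⟩ := hu
  exact ⟨w, hw, h.trans hinf⟩

lemma IsFactor.extend {A : Type*} {w : ℕ → A} {u : List A} (h : IsFactor w u) :
    ∃ b, IsFactor w (u ++ [b]) := by
  obtain ⟨p, hp⟩ := h
  refine ⟨w (p + u.length), p, ?_⟩
  have hl : (u ++ [w (p + u.length)]).length = u.length + 1 := by simp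
  rw [hl, List.range_succ, List.map_append]
  congr 1

lemma Fk_step {ω' : ℕ → Fin 3} {k : ℕ} {u : List (Fin 3)} (h : Fk ω' k u) :
    Fk ω' (k+1) (applySub (tauSub k) u ++ tauSub k 0) := by
  obtain ⟨w, hw, hinf⟩ := h
  obtain ⟨b, hwb⟩ := hw.extend
  refine ⟨w ++ [b], hwb, ?_⟩
  obtain ⟨s, t, hst⟩ := hinf
  have h1 : applySub (rhoSub (k+1)) (w ++ [b]) =
      applySub (tauSub k) s ++
        (applySub (tauSub k) u ++ applySub (tauSub k) (t ++ applySub (rhoSub k) [b])) := by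
    rw [show rhoSub (k+1) = compSub (tauSub k) (rhoSub k) from rfl, applySub_comp,
      applySub_append (rhoSub k), ← hst]
    simp [applySub_append]
  rw [h1]
  have hne : (t ++ applySub (rhoSub k) [b]) ≠ [] := by
    have := one_le_rho_len k b
    intro hc
    rw [List.append_eq_nil_iff] at hc
    rw [hc.2] at this
    simp at this
  obtain ⟨r, hr⟩ := tau0_prefix_image k hne
  refine ⟨applySub (tauSub k) s, r, ?_⟩
  rw [← hr]
  simp [List.append_assoc]

lemma infix_window {ω : ℕ → Fin 3} {u : List (Fin 3)} {m : ℕ} (h : u <:+: prefixW ω m) :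
    IsFactor ω u := by
  obtain ⟨s, t, hst⟩ := h
  have hlen : s.length + u.length + t.length = m := by
    have := congrArg List.length hst
    simp [prefixW] at this
    omega
  refine ⟨s.length, ?_⟩
  apply List.ext_getElem (by simp)
  intro i hi hi'
  simp only [List.getElem_map, List.getElem_range]
  have hb : s.length + i < m := by omega
  have e1 : (s ++ u ++ t)[s.length + i]'(by simp; omega) = ω (s.length + i) := by
    simp_rw [hst]
    simp [prefixW]
  rw [← e1]
  rw [List.getElem_append_left (by simp; omega), List.getElem_append_right (by omega)]
  simp

lemma Fk_isFactor {C : ℕ} {ω ω' : ℕ → Fin 3} (hω : SubstOfInf (rhoSub C) ω' ω)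
    {u : List (Fin 3)} (h : Fk ω' C u) : IsFactor ω u := by
  obtain ⟨w, ⟨p, hp⟩, hinf⟩ := h
  have hpre : prefixW ω' (p + w.length) = prefixW ω' p ++ w := by
    rw [hp]
    simp only [prefixW, List.length_map, List.length_range, List.range_add, List.map_append,
      List.map_map]
    rfl
  have h2 : u <:+: applySub (rhoSub C) (prefixW ω' (p + w.length)) := by
    rw [hpre, applySub_append]
    exact hinf.trans (List.suffix_append _ _).isInfix
  rw [← hω (p + w.length)] at h2
  exact infix_window h2

lemma main_ind (ω' : ℕ → Fin 3) (h1 : ∃ m, ω' m = 0) (h3 : ∃ m, ω' m = 2) (k : ℕ) :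
    ∃ u v : List (Fin 3), Fk ω' k u ∧ Fk ω' k v ∧ u.length = v.length ∧
      ((u.count 0 : ℤ) - (v.count 0 : ℤ) = (k : ℤ) + 1) ∧
      ((u.count 1 : ℤ) - (v.count 1 : ℤ) = -(k : ℤ)) ∧
      ((u.count 2 : ℤ) - (v.count 2 : ℤ) = -1) := by
  induction k with
  | zero =>
    obtain ⟨m1, hm1⟩ := h1
    obtain ⟨m3, hm3⟩ := h3
    refine ⟨[0], [2], ⟨[0], ⟨m1, by simp [List.range_succ, hm1]⟩, by simp [applySub, rhoSub]⟩,
      ⟨[2], ⟨m3, by simp [List.range_succ, hm3]⟩, by simp [applySub, rhoSub]⟩, rfl, by simp, by simp, by simp⟩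
  | succ k ih =>
    obtain ⟨u, v, hu, hv, hlen, e0, e1, e2⟩ := ih
    have hvne : v ≠ [] := by
      intro hc
      rw [hc] at e2
      simp at e2
    obtain ⟨rest, hrest⟩ := tau0_prefix_image k hvne
    have Hv0 : (rest.count 0 : ℤ) = (v.count 1 : ℤ) + 2 * (v.count 2 : ℤ) := by
      have hc : (tauSub k 0 ++ rest).count 0 = (applySub (tauSub k) v).count 0 := by rw [hrest]
      rw [List.count_append, t0c0] at hc
      have h' := count0_image k v
      rw [← hc] at h'
      push_cast at h'
      linarith
    have Hv1 : (2*(k:ℤ)+1) + (rest.count 1 : ℤ) =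
        (2*(k:ℤ)+1) * ((v.count 0 : ℤ) + (v.count 1 : ℤ)) + (5*(k:ℤ)+2) * (v.count 2 : ℤ) := by
      have hc : (tauSub k 0 ++ rest).count 1 = (applySub (tauSub k) v).count 1 := by rw [hrest]
      rw [List.count_append, t0c1] at hc
      have h' := count1_image k v
      rw [← hc] at h'
      push_cast at h'
      linarith
    have Hv2 : (2:ℤ) + (rest.count 2 : ℤ) =
        2 * ((v.count 0 : ℤ) + (v.count 1 : ℤ)) + 5 * (v.count 2 : ℤ) := by
      have hc : (tauSub k 0 ++ rest).count 2 = (applySub (tauSub k) v).count 2 := by rw [hrest]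
      rw [List.count_append, t0c2] at hc
      have h' := count2_image k v
      rw [← hc] at h'
      push_cast at h'
      linarith
    have Hvl : (2*(k:ℤ)+3) + (rest.length : ℤ) =
        (2*(k:ℤ)+3) * (v.count 0 : ℤ) + (2*(k:ℤ)+4) * (v.count 1 : ℤ)
          + (5*(k:ℤ)+9) * (v.count 2 : ℤ) := by
      have hc : (tauSub k 0 ++ rest).length = (applySub (tauSub k) v).length := by rw [hrest]
      rw [List.length_append, t0len] at hc
      have h' := length_image k v
      rw [← hc] at h'
      push_cast at h'
      linarith
    refine ⟨rest, applySub (tauSub k) u ++ tauSub k 0,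
      Fk_infix ⟨tauSub k 0, tauSub k 0, by rw [← hrest]⟩ (Fk_step hv),
      Fk_step hu, ?_, ?_, ?_, ?_⟩
    · have : (rest.length : ℤ) = ((applySub (tauSub k) u ++ tauSub k 0).length : ℤ) := by
        rw [List.length_append]
        push_cast [t0len]
        rw [length_image k u]
        linear_combination Hvl - (2*(k:ℤ)+3)*e0 - (2*(k:ℤ)+4)*e1 - (5*(k:ℤ)+9)*e2
      exact_mod_cast this
    · rw [List.count_append]
      push_cast [t0c0]
      rw [count0_image k u]
      linear_combination Hv0 - e1 - 2*e2
    · rw [List.count_append]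
      push_cast [t0c1]
      rw [count1_image k u]
      linear_combination Hv1 - (2*(k:ℤ)+1)*e0 - (2*(k:ℤ)+1)*e1 - (5*(k:ℤ)+2)*e2
    · rw [List.count_append]
      push_cast [t0c2]
      rw [count2_image k u]
      linear_combination Hv2 - 2*e0 - 2*e1 - 5*e2


theorem stmt14 (C : ℕ) (ω ω' : ℕ → Fin 3)
    (hω : SubstOfInf (rhoSub C) ω' ω)
    (h1 : ∃ m, ω' m = 0) (h3 : ∃ m, ω' m = 2) :
    (∃ u v : List (Fin 3), IsFactor ω u ∧ IsFactor ω v ∧ u.length = v.length ∧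
      |(u.count 0 : ℤ) - (v.count 0 : ℤ)| = (C : ℤ) + 1) ∧
    ¬ BalancedWord C ω := by
  obtain ⟨u, v, hu, hv, hlen, e0, -, -⟩ := main_ind ω' h1 h3 C
  have hfu := Fk_isFactor hω hu
  have hfv := Fk_isFactor hω hv
  have habs : |(u.count 0 : ℤ) - (v.count 0 : ℤ)| = (C : ℤ) + 1 := by
    rw [e0]
    exact abs_of_nonneg (by positivity)
  refine ⟨⟨u, v, hfu, hfv, hlen, habs⟩, fun hb => ?_⟩
  have := hb u v hfu hfv hlen 0
  rw [habs] at this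
  omega
end

section
/- Let ω be a Brun word over 3 letters and C, N ∈ ℕ. If ω^{(N)} (the N-th desubstituted word) is not (12√3·3^N·C)-balanced, then ω is not C-balanced. -/
def brunSub (i j : Fin 3) : Fin 3 → List (Fin 3) := fun k => if k = j then [i, j] else [k]

def BalancedWordR {A : Type*} [DecidableEq A] (C : ℝ) (w : ℕ → A) : Prop :=
  ∀ u v, IsFactor w u → IsFactor w v → u.length = v.length →
    ∀ i, |(u.count i : ℝ) - (v.count i : ℝ)| ≤ C

section QuasiAdditive

variable {a : ℕ → ℝ} {C : ℝ}

lemma subadditive_add_const (h : ∀ p m, |a (p + m) - a p - a m| ≤ C) :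
    Subadditive (fun n => a n + C) :=
  fun p m => by linarith [(abs_le.1 (h p m)).2]

lemma bddBelow_add_const_div (h : ∀ p m, |a (p + m) - a p - a m| ≤ C) :
    BddBelow (Set.range fun n : ℕ => (a n + C) / n) := by
  have hlin : ∀ n : ℕ, n * (a 1 - C) ≤ a n + C := by
    intro n
    induction n with
    | zero =>
      have h00 : |a 0| ≤ C := by simpa using h 0 0
      simp only [CharP.cast_eq_zero, zero_mul]
      linarith [(abs_le.1 h00).1]
    | succ n ih => push_cast; linarith [(abs_le.1 (h n 1)).1]
  refine ⟨min 0 (a 1 - C), ?_⟩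
  rintro _ ⟨n, rfl⟩
  rcases Nat.eq_zero_or_pos n with rfl | hn
  · simp
  · exact (min_le_right _ _).trans ((le_div_iff₀ (by exact_mod_cast hn)).2 (by linarith [hlin n]))

theorem exists_abs_sub_mul_le_of_abs_add_sub_le (h : ∀ p m, |a (p + m) - a p - a m| ≤ C) :
    ∃ f : ℝ, ∀ n : ℕ, |a n - f * n| ≤ C := by
  have h' : ∀ p m, |(-a) (p + m) - (-a) p - (-a) m| ≤ C := fun p m => by
    rw [← abs_neg]
    convert h p m using 2
    simp only [Pi.neg_apply]
    ring
  have hs := subadditive_add_const h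
  have hs' := subadditive_add_const h'
  have hlim : hs.lim + hs'.lim = 0 := by
    refine tendsto_nhds_unique ((hs.tendsto_lim (bddBelow_add_const_div h)).add
      (hs'.tendsto_lim (bddBelow_add_const_div h'))) ?_
    refine (tendsto_const_div_atTop_nhds_zero_nat (2 * C)).congr fun n => ?_
    simp only [Pi.neg_apply]
    ring
  refine ⟨hs.lim, fun n => ?_⟩
  rcases eq_or_ne n 0 with rfl | hn
  · simpa using h 0 0
  have hn' : (0 : ℝ) < n := by exact_mod_cast hn.bot_lt
  have h1 := (le_div_iff₀ hn').1 (hs.lim_le_div (bddBelow_add_const_div h) hn)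
  have h2 := (le_div_iff₀ hn').1 (hs'.lim_le_div (bddBelow_add_const_div h') hn)
  simp only [Pi.neg_apply] at h2
  rw [abs_le]
  constructor <;> nlinarith

end QuasiAdditive

lemma nonpos_of_forall_exists_ge_mul_le {x c : ℝ} (h : ∀ m : ℕ, ∃ n : ℕ, m ≤ n ∧ x * n ≤ c) :
    x ≤ 0 := by
  by_contra! hx
  obtain ⟨m, hm⟩ := exists_nat_gt (c / x)
  obtain ⟨n, hmn, hn⟩ := h m
  have : c < x * n := (div_lt_iff₀' hx).1 (hm.trans_le (by exact_mod_cast hmn))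
  linarith

section Words

variable {A : Type*}

def window (w : ℕ → A) (p m : ℕ) : List A := (List.range m).map (fun t => w (p + t))

@[simp]
lemma length_window (w : ℕ → A) (p m : ℕ) : (window w p m).length = m := by
  simp [window]

@[simp]
lemma length_prefixW (w : ℕ → A) (n : ℕ) : (prefixW w n).length = n := by
  simp [prefixW]

lemma prefixW_add (w : ℕ → A) (p m : ℕ) :
    prefixW w (p + m) = prefixW w p ++ window w p m := by
  simp [prefixW, window, List.range_add, Function.comp_def]

lemma isFactor_window (w : ℕ → A) (p m : ℕ) : IsFactor w (window w p m) :=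
  ⟨p, by rw [length_window]; rfl⟩

lemma isFactor_prefixW (w : ℕ → A) (n : ℕ) : IsFactor w (prefixW w n) :=
  ⟨0, by simp [prefixW]⟩

lemma prefixW_add_length_of_eq_window {w : ℕ → A} {p : ℕ} {u : List A}
    (hu : u = window w p u.length) : prefixW w (p + u.length) = prefixW w p ++ u := by
  rw [prefixW_add, ← hu]

lemma isFactor_applySub {σ : A → List A} {w' w : ℕ → A} (hσ : SubstOfInf σ w' w) {u : List A}
    (hu : IsFactor w' u) : IsFactor w (applySub σ u) := by
  obtain ⟨p, hp⟩ := hu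
  have h := hσ (p + u.length)
  rw [prefixW_add_length_of_eq_window hp, applySub, List.flatMap_append, List.length_append,
    prefixW_add] at h
  exact ⟨_, ((List.append_inj h (by simp)).2).symm⟩

lemma sum_count_eq_length [DecidableEq A] [Fintype A] (l : List A) : ∑ k, l.count k = l.length := by
  simpa using Multiset.sum_count_eq_card (s := Finset.univ) (m := (l : Multiset A))
    (fun a _ => Finset.mem_univ a)

end Words

def BoundedDiscrepancy {A : Type*} [DecidableEq A] (w : ℕ → A) (f : A → ℝ) (D : ℝ) : Prop :=
  ∀ u, IsFactor w u → ∀ k, |(u.count k : ℝ) - f k * u.length| ≤ D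

namespace BoundedDiscrepancy

variable {A : Type*} [DecidableEq A] {w : ℕ → A} {f : A → ℝ} {D : ℝ}

lemma balancedWordR (h : BoundedDiscrepancy w f D) : BalancedWordR (2 * D) w := by
  intro u v hu hv huv k
  calc |(u.count k : ℝ) - v.count k|
      = |((u.count k : ℝ) - f k * u.length) - ((v.count k : ℝ) - f k * v.length)| := by
        rw [huv]; ring_nf
    _ ≤ D + D := (abs_sub _ _).trans (add_le_add (h u hu k) (h v hv k))
    _ = 2 * D := by ring

lemma nonneg (h : BoundedDiscrepancy w f D) (k : A) : 0 ≤ f k := by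
  refine neg_nonpos.1 (nonpos_of_forall_exists_ge_mul_le (c := D) fun m => ⟨m, le_rfl, ?_⟩)
  have := (abs_le.1 (h _ (isFactor_prefixW w m) k)).2
  simp only [length_prefixW] at this
  linarith [Nat.cast_nonneg (α := ℝ) ((prefixW w m).count k)]

lemma sum_eq_one [Fintype A] (h : BoundedDiscrepancy w f D) : ∑ k, f k = 1 := by
  have hsum : ∀ n : ℕ, |(1 - ∑ k, f k) * n| ≤ Fintype.card A * D := fun n => by
    have hcount : ((n : ℕ) : ℝ) = ∑ k, ((prefixW w n).count k : ℝ) := by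
      exact_mod_cast (sum_count_eq_length (prefixW w n)).trans (length_prefixW w n) |>.symm
    calc |(1 - ∑ k, f k) * n|
        = |∑ k, (((prefixW w n).count k : ℝ) - f k * (prefixW w n).length)| := by
          rw [Finset.sum_sub_distrib, ← Finset.sum_mul, length_prefixW, ← hcount]; ring_nf
      _ ≤ ∑ k : A, D := (Finset.abs_sum_le_sum_abs _ _).trans
          (Finset.sum_le_sum fun k _ => h _ (isFactor_prefixW w n) k)
      _ = Fintype.card A * D := by simp
  have h1 := nonpos_of_forall_exists_ge_mul_le fun m => ⟨m, le_rfl, (le_abs_self _).trans (hsum m)⟩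
  have h2 : ∑ k, f k - 1 ≤ 0 := nonpos_of_forall_exists_ge_mul_le fun m => ⟨m, le_rfl, by
    rw [← neg_sub, neg_mul]; exact (neg_le_abs _).trans (hsum m)⟩
  linarith

lemma add_le_one [Fintype A] (h : BoundedDiscrepancy w f D) {k l : A} (hkl : k ≠ l) :
    f k + f l ≤ 1 := by
  rw [← h.sum_eq_one, ← Finset.sum_pair hkl]
  exact Finset.sum_le_sum_of_subset_of_nonneg (Finset.subset_univ _) fun a _ _ => h.nonneg a

end BoundedDiscrepancy

lemma BalancedWordR.mono {A : Type*} [DecidableEq A] {C C' : ℝ} {w : ℕ → A} (hC : C ≤ C')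
    (h : BalancedWordR C w) : BalancedWordR C' w :=
  fun u v hu hv huv k => (h u v hu hv huv k).trans hC

lemma BalancedWordR.exists_boundedDiscrepancy {A : Type*} [DecidableEq A] {C : ℝ} {w : ℕ → A}
    (h : BalancedWordR C w) : ∃ f, BoundedDiscrepancy w f (2 * C) := by
  have hcount : ∀ k p m, ((prefixW w (p + m)).count k : ℝ)
      = (prefixW w p).count k + (window w p m).count k := fun k p m => by
    rw [prefixW_add, List.count_append]; push_cast; ring
  have hquasi : ∀ k p m, |((prefixW w (p + m)).count k : ℝ) - (prefixW w p).count k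
      - (prefixW w m).count k| ≤ C := fun k p m => by
    rw [hcount, add_sub_cancel_left]
    exact h _ _ (isFactor_window w p m) (isFactor_prefixW w m) (by simp) k
  choose f hf using fun k => exists_abs_sub_mul_le_of_abs_add_sub_le
    (a := fun n => ((prefixW w n).count k : ℝ)) (hquasi k)
  refine ⟨f, fun u ⟨p, hp⟩ k => ?_⟩
  have hu : (u.count k : ℝ) = (prefixW w (p + u.length)).count k - (prefixW w p).count k := by
    rw [prefixW_add_length_of_eq_window hp, List.count_append]; push_cast; ring
  calc |(u.count k : ℝ) - f k * u.length|
      = |(((prefixW w (p + u.length)).count k : ℝ) - f k * (p + u.length : ℕ))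
          - (((prefixW w p).count k : ℝ) - f k * p)| := by rw [hu]; push_cast; ring_nf
    _ ≤ C + C := (abs_sub _ _).trans (add_le_add (hf k _) (hf k p))
    _ = 2 * C := by ring

lemma abs_add_mul_le_two_mul {x y c D : ℝ} (hx : |x| ≤ D) (hy : |y| ≤ D) (hc : |c| ≤ 1) :
    |x + c * y| ≤ 2 * D :=
  calc |x + c * y| ≤ |x| + |c| * |y| := (abs_add_le _ _).trans_eq (by rw [abs_mul])
    _ ≤ D + 1 * D := by gcongr
    _ = 2 * D := by ring

section Brun

variable {i j : Fin 3}

lemma count_applySub_brunSub (hij : i ≠ j) (u : List (Fin 3)) (k : Fin 3) :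
    (applySub (brunSub i j) u).count k = u.count k + if k = i then u.count j else 0 := by
  induction u with
  | nil => simp [applySub]
  | cons a u ih =>
    rw [applySub, List.flatMap_cons, List.count_append, ← applySub, ih]
    by_cases haj : a = j <;> by_cases hki : k = i <;>
      simp_all [brunSub, List.count_cons, eq_comm (a := k)] <;> omega

lemma length_applySub_brunSub (u : List (Fin 3)) :
    (applySub (brunSub i j) u).length = u.length + u.count j := by
  induction u with
  | nil => simp [applySub]
  | cons a u ih =>
    rw [applySub, List.flatMap_cons, List.length_append, ← applySub, ih]
    by_cases h : a = j <;> simp [brunSub, h] <;> omega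

namespace BoundedDiscrepancy

variable {w' w : ℕ → Fin 3} {f : Fin 3 → ℝ} {D : ℝ}

lemma le_of_substOfInf_brunSub (hij : i ≠ j) (hσ : SubstOfInf (brunSub i j) w' w)
    (h : BoundedDiscrepancy w f D) : f j ≤ f i := by
  refine sub_nonpos.1 (nonpos_of_forall_exists_ge_mul_le (c := 2 * D) fun m => ?_)
  set U := applySub (brunSub i j) (prefixW w' m)
  have hU := isFactor_applySub hσ (isFactor_prefixW w' m)
  refine ⟨U.length, by simp [U, length_applySub_brunSub], ?_⟩
  have hcount : (U.count j : ℝ) ≤ U.count i := by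
    exact_mod_cast (by simp [U, count_applySub_brunSub hij, hij.symm] : U.count j ≤ U.count i)
  have hi := abs_le.1 (h U hU i)
  have hj := abs_le.1 (h U hU j)
  rw [sub_mul]
  linarith

theorem exists_of_substOfInf_brunSub (hij : i ≠ j) (hσ : SubstOfInf (brunSub i j) w' w)
    (h : BoundedDiscrepancy w f D) : ∃ g, BoundedDiscrepancy w' g (2 * D) := by
  have hji := h.le_of_substOfInf_brunSub hij hσ
  have hij1 := h.add_le_one hij
  have hs : 0 < 1 - f j := by linarith
  set g : Fin 3 → ℝ := fun k => (f k - if k = i then f j else 0) / (1 - f j)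
  refine ⟨g, fun u hu k => ?_⟩
  set U := applySub (brunSub i j) u
  have hU := isFactor_applySub hσ hu
  have hUj : U.count j = u.count j := by simp [U, count_applySub_brunSub hij, hij.symm]
  have hcount : ∀ l, (u.count l : ℝ) = U.count l - if l = i then (U.count j : ℝ) else 0 := by
    intro l
    simp only [hUj, U, count_applySub_brunSub hij]
    split_ifs <;> push_cast <;> ring
  have hlen : (u.length : ℝ) = U.length - U.count j := by
    simp only [hUj, U, length_applySub_brunSub]; push_cast; ring
  set X := fun l => (U.count l : ℝ) - f l * U.length
  -- `g` is chosen so that the `U.length` terms cancel in this identity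
  have hident : (u.count k : ℝ) - g k * u.length
      = X k + (g k - if k = i then 1 else 0) * X j := by
    simp only [X, hcount, hlen, g]
    field_simp
    split_ifs <;> ring
  rw [hident]
  refine abs_add_mul_le_two_mul (h U hU k) (h U hU j) ?_
  rw [abs_le]
  by_cases hk : k = i
  · subst hk
    simp only [g, if_true]
    have h0 : 0 ≤ (f k - f j) / (1 - f j) := div_nonneg (by linarith) hs.le
    have h1 : (f k - f j) / (1 - f j) ≤ 1 := (div_le_one hs).2 (by linarith [h.nonneg j])
    constructor <;> linarith
  · have hkj : f k + f j ≤ 1 := by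
      rcases eq_or_ne k j with rfl | hkj
      · linarith
      · exact h.add_le_one hkj
    simp only [g, hk, if_false, sub_zero]
    exact ⟨by linarith [div_nonneg (h.nonneg k) hs.le], (div_le_one hs).2 (by linarith)⟩

end BoundedDiscrepancy

end Brun

theorem stmt16_general (i j : ℕ → Fin 3)
    (hij : ∀ n, i n ≠ j n)
    (ω : ℕ → Fin 3) (Ω : ℕ → ℕ → Fin 3) (hΩ0 : Ω 0 = ω)
    (hΩ : ∀ n, SubstOfInf (brunSub (i n) (j n)) (Ω (n + 1)) (Ω n))
    (C N : ℕ)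
    (hN : ¬ BalancedWordR (12 * Real.sqrt 3 * 3 ^ N * C) (Ω N)) :
    ¬ BalancedWordR (C : ℝ) ω := by
  intro hbal
  subst hΩ0
  have hdisc : ∀ n, ∃ f, BoundedDiscrepancy (Ω n) f (2 ^ (n + 1) * C) := by
    intro n
    induction n with
    | zero => simpa using hbal.exists_boundedDiscrepancy
    | succ n ih =>
      obtain ⟨f, hf⟩ := ih
      obtain ⟨g, hg⟩ := hf.exists_of_substOfInf_brunSub (hij n) (hΩ n)
      exact ⟨g, by convert hg using 1; ring⟩
  obtain ⟨f, hf⟩ := hdisc N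
  refine hN (hf.balancedWordR.mono ?_)
  have h23 : (2 : ℝ) ^ N ≤ 3 ^ N := pow_le_pow_left₀ (by norm_num) (by norm_num) N
  have hsqrt : (1 : ℝ) ≤ Real.sqrt 3 := Real.one_le_sqrt.2 (by norm_num)
  calc 2 * (2 ^ (N + 1) * (C : ℝ)) = 4 * 2 ^ N * C := by ring
    _ ≤ 12 * 1 * 3 ^ N * C := by gcongr; linarith
    _ ≤ 12 * Real.sqrt 3 * 3 ^ N * C := by gcongr

theorem stmt16 (i j : ℕ → Fin 3)
    (hij : ∀ n, i n ≠ j n)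
    (hadm : ∀ n, (i (n + 1) = i n ∧ j (n + 1) = j n) ∨ i (n + 1) = j n)
    (hinf : ∀ a : Fin 3, ∀ N : ℕ, ∃ n ≥ N, i n = a)
    (ω : ℕ → Fin 3) (Ω : ℕ → ℕ → Fin 3) (hΩ0 : Ω 0 = ω)
    (hΩ : ∀ n, SubstOfInf (brunSub (i n) (j n)) (Ω (n + 1)) (Ω n))
    (C N : ℕ)
    (hN : ¬ BalancedWordR (12 * Real.sqrt 3 * 3 ^ N * C) (Ω N)) :
    ¬ BalancedWordR (C : ℝ) ω :=
  stmt16_general i j hij ω Ω hΩ0 hΩ C N hN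
end
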